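/- arXiv:2402.02701 — 9 statements merged into one kernel-verified Lean document; each statement's English description precedes it below -/
import Mathlib

section
/- Under hypotheses (R2), (P1), (E), let (Ω, μ) be a probability space, let T ∈ ℕ, γ ≥ 0, θ ∈ Θ, f : S → S, and let s_0, …, s_T : Ω → S be maps such that for each t ≤ T the functions ω ↦ r(s_t(ω), π(φ(f(s_t(ω))),θ)), ω ↦ r(s_t(ω), π(φ(s_t(ω)),θ)), and ω ↦ ‖f(s_t(ω)) − s_t(ω)‖ are μ-integrable. Then |∫ Σ_{t=0}^{T} γ^t r(s_t(ω), π(φ(f(s_t(ω))),θ)) dμ(ω) − ∫ Σ_{t=0}^{T} γ^t r(s_t(ω), π(φ(s_t(ω)),θ)) dμ(ω)| ≤ L_{r2}·L_{π1}·L_φ · Σ_{t=0}^{T} γ^t ∫ ‖f(s_t(ω)) − s_t(ω)‖ dμ(ω). -/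
open MeasureTheory

/-- Fixed policy shift error in expectation (Theorem: fixed policy shift error). -/
theorem fixed_policy_shift_error_expectation
    {S Φ A Θ : Type*}
    [NormedAddCommGroup S] [NormedSpace ℝ S]
    [NormedAddCommGroup Φ] [NormedSpace ℝ Φ]
    [NormedAddCommGroup A] [NormedSpace ℝ A]
    [NormedAddCommGroup Θ] [NormedSpace ℝ Θ]
    (φ : S → Φ) (π : Φ → Θ → A) (r : S → A → ℝ)
    (Lr2 Lπ1 Lφ : ℝ) (hLr2 : 0 ≤ Lr2) (hLπ1 : 0 ≤ Lπ1) (hLφ : 0 ≤ Lφ)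
    (hR2 : ∀ (s : S) (a a' : A), |r s a - r s a'| ≤ Lr2 * ‖a - a'‖)
    (hP1 : ∀ (x y : Φ) (θ : Θ), ‖π x θ - π y θ‖ ≤ Lπ1 * ‖x - y‖)
    (hE : ∀ s s' : S, ‖φ s - φ s'‖ ≤ Lφ * ‖s - s'‖)
    {Ω : Type*} [MeasurableSpace Ω] (μ : Measure Ω) [IsProbabilityMeasure μ]
    (T : ℕ) (γ : ℝ) (hγ : 0 ≤ γ) (θ : Θ) (f : S → S) (s : ℕ → Ω → S)
    (hInt1 : ∀ t ≤ T, Integrable (fun ω => r (s t ω) (π (φ (f (s t ω))) θ)) μ)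
    (hInt2 : ∀ t ≤ T, Integrable (fun ω => r (s t ω) (π (φ (s t ω)) θ)) μ)
    (hInt3 : ∀ t ≤ T, Integrable (fun ω => ‖f (s t ω) - s t ω‖) μ) :
    |(∫ ω, ∑ t ∈ Finset.range (T + 1), γ ^ t * r (s t ω) (π (φ (f (s t ω))) θ) ∂μ) -
      ∫ ω, ∑ t ∈ Finset.range (T + 1), γ ^ t * r (s t ω) (π (φ (s t ω)) θ) ∂μ| ≤
    Lr2 * Lπ1 * Lφ *
      ∑ t ∈ Finset.range (T + 1), γ ^ t * ∫ ω, ‖f (s t ω) - s t ω‖ ∂μ := by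

  have hmem : ∀ t ∈ Finset.range (T+1), t ≤ T := fun t ht => Nat.lt_succ_iff.mp (Finset.mem_range.mp ht)
  have hI1 : ∀ t ∈ Finset.range (T+1), Integrable (fun ω => γ ^ t * r (s t ω) (π (φ (f (s t ω))) θ)) μ :=
    fun t ht => ((hInt1 t (hmem t ht)).const_mul _)
  have hI2 : ∀ t ∈ Finset.range (T+1), Integrable (fun ω => γ ^ t * r (s t ω) (π (φ (s t ω)) θ)) μ :=
    fun t ht => ((hInt2 t (hmem t ht)).const_mul _)
  rw [integral_finset_sum _ hI1, integral_finset_sum _ hI2, ← Finset.sum_sub_distrib]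
  calc |∑ t ∈ Finset.range (T+1), ((∫ ω, γ ^ t * r (s t ω) (π (φ (f (s t ω))) θ) ∂μ)
          - ∫ ω, γ ^ t * r (s t ω) (π (φ (s t ω)) θ) ∂μ)|
      ≤ ∑ t ∈ Finset.range (T+1), |(∫ ω, γ ^ t * r (s t ω) (π (φ (f (s t ω))) θ) ∂μ)
          - ∫ ω, γ ^ t * r (s t ω) (π (φ (s t ω)) θ) ∂μ| := Finset.abs_sum_le_sum_abs _ _
    _ ≤ ∑ t ∈ Finset.range (T+1), Lr2 * Lπ1 * Lφ * (γ ^ t * ∫ ω, ‖f (s t ω) - s t ω‖ ∂μ) := by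
        apply Finset.sum_le_sum
        intro t ht
        rw [← integral_sub (hI1 t ht) (hI2 t ht)]
        have h1 : ∀ ω, |γ ^ t * r (s t ω) (π (φ (f (s t ω))) θ) - γ ^ t * r (s t ω) (π (φ (s t ω)) θ)|
            ≤ Lr2 * Lπ1 * Lφ * (γ ^ t * ‖f (s t ω) - s t ω‖) := by
          intro ω
          rw [← mul_sub, abs_mul, abs_pow, abs_of_nonneg hγ]
          have hstep : |r (s t ω) (π (φ (f (s t ω))) θ) - r (s t ω) (π (φ (s t ω)) θ)|
              ≤ Lr2 * Lπ1 * Lφ * ‖f (s t ω) - s t ω‖ := by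
            calc |r (s t ω) (π (φ (f (s t ω))) θ) - r (s t ω) (π (φ (s t ω)) θ)|
                ≤ Lr2 * ‖π (φ (f (s t ω))) θ - π (φ (s t ω)) θ‖ := hR2 _ _ _
              _ ≤ Lr2 * (Lπ1 * ‖φ (f (s t ω)) - φ (s t ω)‖) := by
                  exact mul_le_mul_of_nonneg_left (hP1 _ _ _) hLr2
              _ ≤ Lr2 * (Lπ1 * (Lφ * ‖f (s t ω) - s t ω‖)) := by
                  exact mul_le_mul_of_nonneg_left
                    (mul_le_mul_of_nonneg_left (hE _ _) hLπ1) hLr2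
              _ = Lr2 * Lπ1 * Lφ * ‖f (s t ω) - s t ω‖ := by ring
          calc γ ^ t * |r (s t ω) (π (φ (f (s t ω))) θ) - r (s t ω) (π (φ (s t ω)) θ)|
              ≤ γ ^ t * (Lr2 * Lπ1 * Lφ * ‖f (s t ω) - s t ω‖) :=
                mul_le_mul_of_nonneg_left hstep (pow_nonneg hγ t)
            _ = Lr2 * Lπ1 * Lφ * (γ ^ t * ‖f (s t ω) - s t ω‖) := by ring
        calc |∫ ω, (γ ^ t * r (s t ω) (π (φ (f (s t ω))) θ) - γ ^ t * r (s t ω) (π (φ (s t ω)) θ)) ∂μ|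
            ≤ ∫ ω, |γ ^ t * r (s t ω) (π (φ (f (s t ω))) θ) - γ ^ t * r (s t ω) (π (φ (s t ω)) θ)| ∂μ :=
              by simpa [Real.norm_eq_abs] using norm_integral_le_integral_norm (fun ω => γ ^ t * r (s t ω) (π (φ (f (s t ω))) θ) - γ ^ t * r (s t ω) (π (φ (s t ω)) θ))
          _ ≤ ∫ ω, Lr2 * Lπ1 * Lφ * (γ ^ t * ‖f (s t ω) - s t ω‖) ∂μ := by
              apply integral_mono_of_nonneg
              · exact Filter.Eventually.of_forall fun ω => abs_nonneg _
              · exact (((hInt3 t (hmem t ht)).const_mul (γ ^ t)).const_mul _)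
              · exact Filter.Eventually.of_forall h1
          _ = Lr2 * Lπ1 * Lφ * (γ ^ t * ∫ ω, ‖f (s t ω) - s t ω‖ ∂μ) := by
              rw [MeasureTheory.integral_const_mul, MeasureTheory.integral_const_mul]
    _ = Lr2 * Lπ1 * Lφ * ∑ t ∈ Finset.range (T+1), γ ^ t * ∫ ω, ‖f (s t ω) - s t ω‖ ∂μ := by
        rw [Finset.mul_sum]
end

section
/- Under hypotheses (T1), (T2), (P1), (E), let 𝒯, 𝒯' : S × A × Ξ → S satisfy ‖𝒯(s,a,ξ) − 𝒯'(s,a,ξ)‖ ≤ ζ for all s, a, ξ, where 𝒯 satisfies (T1) and (T2). Let u, v : ℕ → S be trajectories with the same parameter θ, same noise sequence ξ, and same initial state u(0) = v(0), where u(t+1) = 𝒯(u(t), π(φ(u(t)),θ), ξ(t)) and v(t+1) = 𝒯'(v(t), π(φ(v(t)),θ), ξ(t)). Then for all t ∈ ℕ: ‖u(t) − v(t)‖ ≤ ζ · Σ_{k=0}^{t−1} ν^k, where ν = L_{t1} + L_{t2}·L_{π1}·L_φ (so the bound equals ζ(1−ν^t)/(1−ν) when ν ≠ 1). -/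
/-- Lemma: same initial state, transitions differing by ζ give deviation ≤ ζ·Σ_{k<t} ν^k. -/
theorem state_deviation_same_initial_different_transition
    {S Φ A Θ Ξ : Type*}
    [NormedAddCommGroup S] [NormedSpace ℝ S]
    [NormedAddCommGroup Φ] [NormedSpace ℝ Φ]
    [NormedAddCommGroup A] [NormedSpace ℝ A]
    [NormedAddCommGroup Θ] [NormedSpace ℝ Θ]
    (φ : S → Φ) (π : Φ → Θ → A) (𝒯 𝒯' : S → A → Ξ → S)
    (Lt1 Lt2 Lπ1 Lφ : ℝ)
    (hLt1 : 0 ≤ Lt1) (hLt2 : 0 ≤ Lt2) (hLπ1 : 0 ≤ Lπ1) (hLφ : 0 ≤ Lφ)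
    (hT1 : ∀ (s s' : S) (a : A) (ξ : Ξ), ‖𝒯 s a ξ - 𝒯 s' a ξ‖ ≤ Lt1 * ‖s - s'‖)
    (hT2 : ∀ (s : S) (a a' : A) (ξ : Ξ), ‖𝒯 s a ξ - 𝒯 s a' ξ‖ ≤ Lt2 * ‖a - a'‖)
    (hP1 : ∀ (x y : Φ) (θ : Θ), ‖π x θ - π y θ‖ ≤ Lπ1 * ‖x - y‖)
    (hE : ∀ s s' : S, ‖φ s - φ s'‖ ≤ Lφ * ‖s - s'‖)
    (ζ : ℝ) (hζ : 0 ≤ ζ)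
    (hTT' : ∀ (s : S) (a : A) (ξ : Ξ), ‖𝒯 s a ξ - 𝒯' s a ξ‖ ≤ ζ)
    (ξ : ℕ → Ξ) (θ : Θ) (u v : ℕ → S)
    (hu : ∀ t, u (t + 1) = 𝒯 (u t) (π (φ (u t)) θ) (ξ t))
    (hv : ∀ t, v (t + 1) = 𝒯' (v t) (π (φ (v t)) θ) (ξ t))
    (h0 : u 0 = v 0) :
    ∀ t : ℕ, ‖u t - v t‖ ≤
      ζ * ∑ k ∈ Finset.range t, (Lt1 + Lt2 * Lπ1 * Lφ) ^ k := by
  intro t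
  induction t with
  | zero => simp [h0]
  | succ t ih =>
    set ν := Lt1 + Lt2 * Lπ1 * Lφ with hν
    have hν0 : 0 ≤ ν := by positivity
    have key : ‖u (t+1) - v (t+1)‖ ≤ ν * ‖u t - v t‖ + ζ := by
      rw [hu, hv]
      calc ‖𝒯 (u t) (π (φ (u t)) θ) (ξ t) - 𝒯' (v t) (π (φ (v t)) θ) (ξ t)‖
          ≤ ‖𝒯 (u t) (π (φ (u t)) θ) (ξ t) - 𝒯 (v t) (π (φ (u t)) θ) (ξ t)‖
            + ‖𝒯 (v t) (π (φ (u t)) θ) (ξ t) - 𝒯 (v t) (π (φ (v t)) θ) (ξ t)‖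
            + ‖𝒯 (v t) (π (φ (v t)) θ) (ξ t) - 𝒯' (v t) (π (φ (v t)) θ) (ξ t)‖ := by
            have := norm_add₃_le (a := 𝒯 (u t) (π (φ (u t)) θ) (ξ t) - 𝒯 (v t) (π (φ (u t)) θ) (ξ t))
              (b := 𝒯 (v t) (π (φ (u t)) θ) (ξ t) - 𝒯 (v t) (π (φ (v t)) θ) (ξ t))
              (c := 𝒯 (v t) (π (φ (v t)) θ) (ξ t) - 𝒯' (v t) (π (φ (v t)) θ) (ξ t))
            simpa using this
        _ ≤ Lt1 * ‖u t - v t‖ + Lt2 * (Lπ1 * (Lφ * ‖u t - v t‖)) + ζ := by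
            gcongr
            · exact hT1 _ _ _ _
            · calc ‖𝒯 (v t) (π (φ (u t)) θ) (ξ t) - 𝒯 (v t) (π (φ (v t)) θ) (ξ t)‖
                  ≤ Lt2 * ‖π (φ (u t)) θ - π (φ (v t)) θ‖ := hT2 _ _ _ _
                _ ≤ Lt2 * (Lπ1 * ‖φ (u t) - φ (v t)‖) := by
                    gcongr; exact hP1 _ _ _
                _ ≤ Lt2 * (Lπ1 * (Lφ * ‖u t - v t‖)) := by
                    gcongr; exact hE _ _
            · exact hTT' _ _ _
        _ = ν * ‖u t - v t‖ + ζ := by ring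
    calc ‖u (t+1) - v (t+1)‖ ≤ ν * ‖u t - v t‖ + ζ := key
      _ ≤ ν * (ζ * ∑ k ∈ Finset.range t, ν ^ k) + ζ := by gcongr
      _ = ζ * ∑ k ∈ Finset.range (t+1), ν ^ k := by
          rw [geom_sum_succ]
          ring
end

section
/- Under hypotheses (T1), (T2), (P1), (E), let 𝒯, 𝒯' : S × A × Ξ → S satisfy ‖𝒯(s,a,ξ) − 𝒯'(s,a,ξ)‖ ≤ ζ for all s, a, ξ, where 𝒯 satisfies (T1) and (T2). Let u, v : ℕ → S be trajectories with the same parameter θ and same noise sequence ξ, where u(t+1) = 𝒯(u(t), π(φ(u(t)),θ), ξ(t)), v(t+1) = 𝒯'(v(t), π(φ(v(t)),θ), ξ(t)), and ‖u(0) − v(0)‖ ≤ ε. Then for all t ∈ ℕ: ‖u(t) − v(t)‖ ≤ ν^t · ε + ζ · Σ_{k=0}^{t−1} ν^k, where ν = L_{t1} + L_{t2}·L_{π1}·L_φ. -/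
/-- Lemma: different initial states and transitions differing by ζ:
deviation ≤ ν^t·ε + ζ·Σ_{k<t} ν^k. -/
theorem state_deviation_different_initial_and_transition
    {S Φ A Θ Ξ : Type*}
    [NormedAddCommGroup S] [NormedSpace ℝ S]
    [NormedAddCommGroup Φ] [NormedSpace ℝ Φ]
    [NormedAddCommGroup A] [NormedSpace ℝ A]
    [NormedAddCommGroup Θ] [NormedSpace ℝ Θ]
    (φ : S → Φ) (π : Φ → Θ → A) (𝒯 𝒯' : S → A → Ξ → S)
    (Lt1 Lt2 Lπ1 Lφ : ℝ)
    (hLt1 : 0 ≤ Lt1) (hLt2 : 0 ≤ Lt2) (hLπ1 : 0 ≤ Lπ1) (hLφ : 0 ≤ Lφ)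
    (hT1 : ∀ (s s' : S) (a : A) (ξ : Ξ), ‖𝒯 s a ξ - 𝒯 s' a ξ‖ ≤ Lt1 * ‖s - s'‖)
    (hT2 : ∀ (s : S) (a a' : A) (ξ : Ξ), ‖𝒯 s a ξ - 𝒯 s a' ξ‖ ≤ Lt2 * ‖a - a'‖)
    (hP1 : ∀ (x y : Φ) (θ : Θ), ‖π x θ - π y θ‖ ≤ Lπ1 * ‖x - y‖)
    (hE : ∀ s s' : S, ‖φ s - φ s'‖ ≤ Lφ * ‖s - s'‖)
    (ε ζ : ℝ) (hε : 0 ≤ ε) (hζ : 0 ≤ ζ)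
    (hTT' : ∀ (s : S) (a : A) (ξ : Ξ), ‖𝒯 s a ξ - 𝒯' s a ξ‖ ≤ ζ)
    (ξ : ℕ → Ξ) (θ : Θ) (u v : ℕ → S)
    (hu : ∀ t, u (t + 1) = 𝒯 (u t) (π (φ (u t)) θ) (ξ t))
    (hv : ∀ t, v (t + 1) = 𝒯' (v t) (π (φ (v t)) θ) (ξ t))
    (h0 : ‖u 0 - v 0‖ ≤ ε) :
    ∀ t : ℕ, ‖u t - v t‖ ≤
      (Lt1 + Lt2 * Lπ1 * Lφ) ^ t * ε +
        ζ * ∑ k ∈ Finset.range t, (Lt1 + Lt2 * Lπ1 * Lφ) ^ k := by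
  set ν := Lt1 + Lt2 * Lπ1 * Lφ with hν
  have hν0 : 0 ≤ ν := by positivity
  intro t
  induction t with
  | zero => simpa using h0
  | succ t ih =>
    have step : ‖u (t+1) - v (t+1)‖ ≤ ν * ‖u t - v t‖ + ζ := by
      rw [hu, hv]
      have h1 := hT1 (u t) (v t) (π (φ (u t)) θ) (ξ t)
      have h2 := hT2 (v t) (π (φ (u t)) θ) (π (φ (v t)) θ) (ξ t)
      have h3 := hTT' (v t) (π (φ (v t)) θ) (ξ t)
      have hp := hP1 (φ (u t)) (φ (v t)) θ
      have he := hE (u t) (v t)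
      have h2' : ‖𝒯 (v t) (π (φ (u t)) θ) (ξ t) - 𝒯 (v t) (π (φ (v t)) θ) (ξ t)‖
          ≤ Lt2 * Lπ1 * Lφ * ‖u t - v t‖ := by
        calc _ ≤ Lt2 * ‖π (φ (u t)) θ - π (φ (v t)) θ‖ := h2
          _ ≤ Lt2 * (Lπ1 * ‖φ (u t) - φ (v t)‖) := by
              exact mul_le_mul_of_nonneg_left hp hLt2
          _ ≤ Lt2 * (Lπ1 * (Lφ * ‖u t - v t‖)) := by
              gcongr
          _ = Lt2 * Lπ1 * Lφ * ‖u t - v t‖ := by ring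
      calc ‖𝒯 (u t) (π (φ (u t)) θ) (ξ t) - 𝒯' (v t) (π (φ (v t)) θ) (ξ t)‖
          ≤ ‖𝒯 (u t) (π (φ (u t)) θ) (ξ t) - 𝒯 (v t) (π (φ (u t)) θ) (ξ t)‖
            + ‖𝒯 (v t) (π (φ (u t)) θ) (ξ t) - 𝒯 (v t) (π (φ (v t)) θ) (ξ t)‖
            + ‖𝒯 (v t) (π (φ (v t)) θ) (ξ t) - 𝒯' (v t) (π (φ (v t)) θ) (ξ t)‖ := by
              exact norm_sub_le_norm_sub_add_norm_sub _ _ _ |>.trans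
                (by gcongr; exact norm_sub_le_norm_sub_add_norm_sub _ _ _)
        _ ≤ Lt1 * ‖u t - v t‖ + Lt2 * Lπ1 * Lφ * ‖u t - v t‖ + ζ := by
              gcongr
        _ = ν * ‖u t - v t‖ + ζ := by rw [hν]; ring
    have : ν * ‖u t - v t‖ + ζ ≤ ν * (ν ^ t * ε + ζ * ∑ k ∈ Finset.range t, ν ^ k) + ζ := by
      gcongr
    refine step.trans (this.trans ?_)
    exact le_of_eq (by rw [geom_sum_succ]; ring)
end

section
/- Under hypotheses (T1), (T2), (P1), (R1), (R2), (E), suppose 0 ≤ γ < 1, let 𝒯, 𝒯' : S × A × Ξ → S satisfy ‖𝒯(s,a,ξ) − 𝒯'(s,a,ξ)‖ ≤ ζ for all s, a, ξ (𝒯 satisfying (T1), (T2)), let f : S → S be a distractor with ‖φ(f(x)) − φ(x)‖ ≤ ϱ for all x ∈ S, and let u, v : ℕ → S be trajectories with the same parameter θ and same noise sequence ξ, where u(t+1) = 𝒯(u(t), π(φ(u(t)),θ), ξ(t)), v(t+1) = 𝒯'(v(t), π(φ(v(t)),θ), ξ(t)), and ‖u(0) − v(0)‖ ≤ ε. Then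 for every T ∈ ℕ: |Σ_{t=0}^{T} γ^t r(v(t), π(φ(f(v(t))),θ)) − Σ_{t=0}^{T} γ^t r(u(t), π(φ(u(t)),θ))| ≤ λ·ζ·Σ_{t=0}^{T} γ^t Σ_{k=0}^{t−1} ν^k + λ·ε·Σ_{t=0}^{T} γ^t ν^t + L_{r2}·L_{π1}·ϱ·(1−γ^{T+1})/(1−γ), where ν = L_{t1} + L_{t2}·L_{π1}·L_φ and λ = L_{r1} + L_{r2}·L_{π1}·L_φ. -/
/-- Theorem: performance shift between the training environment (trajectory u,
no distractor) and the testing environment (trajectory v, distractor f). -/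
theorem train_test_fixed_policy_shift
    {S Φ A Θ Ξ : Type*}
    [NormedAddCommGroup S] [NormedSpace ℝ S]
    [NormedAddCommGroup Φ] [NormedSpace ℝ Φ]
    [NormedAddCommGroup A] [NormedSpace ℝ A]
    [NormedAddCommGroup Θ] [NormedSpace ℝ Θ]
    (φ : S → Φ) (π : Φ → Θ → A) (r : S → A → ℝ) (𝒯 𝒯' : S → A → Ξ → S)
    (Lt1 Lt2 Lπ1 Lr1 Lr2 Lφ : ℝ)
    (hLt1 : 0 ≤ Lt1) (hLt2 : 0 ≤ Lt2) (hLπ1 : 0 ≤ Lπ1)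
    (hLr1 : 0 ≤ Lr1) (hLr2 : 0 ≤ Lr2) (hLφ : 0 ≤ Lφ)
    (hT1 : ∀ (s s' : S) (a : A) (ξ : Ξ), ‖𝒯 s a ξ - 𝒯 s' a ξ‖ ≤ Lt1 * ‖s - s'‖)
    (hT2 : ∀ (s : S) (a a' : A) (ξ : Ξ), ‖𝒯 s a ξ - 𝒯 s a' ξ‖ ≤ Lt2 * ‖a - a'‖)
    (hP1 : ∀ (x y : Φ) (θ : Θ), ‖π x θ - π y θ‖ ≤ Lπ1 * ‖x - y‖)
    (hR1 : ∀ (s s' : S) (a : A), |r s a - r s' a| ≤ Lr1 * ‖s - s'‖)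
    (hR2 : ∀ (s : S) (a a' : A), |r s a - r s a'| ≤ Lr2 * ‖a - a'‖)
    (hE : ∀ s s' : S, ‖φ s - φ s'‖ ≤ Lφ * ‖s - s'‖)
    (γ : ℝ) (hγ0 : 0 ≤ γ) (hγ1 : γ < 1)
    (ε ζ ϱ : ℝ) (hε : 0 ≤ ε) (hζ : 0 ≤ ζ) (hϱ : 0 ≤ ϱ)
    (hTT' : ∀ (s : S) (a : A) (ξ : Ξ), ‖𝒯 s a ξ - 𝒯' s a ξ‖ ≤ ζ)
    (f : S → S) (hf : ∀ x : S, ‖φ (f x) - φ x‖ ≤ ϱ)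
    (ξ : ℕ → Ξ) (θ : Θ) (u v : ℕ → S)
    (hu : ∀ t, u (t + 1) = 𝒯 (u t) (π (φ (u t)) θ) (ξ t))
    (hv : ∀ t, v (t + 1) = 𝒯' (v t) (π (φ (v t)) θ) (ξ t))
    (h0 : ‖u 0 - v 0‖ ≤ ε) :
    ∀ T : ℕ,
      |∑ t ∈ Finset.range (T + 1), γ ^ t * r (v t) (π (φ (f (v t))) θ) -
        ∑ t ∈ Finset.range (T + 1), γ ^ t * r (u t) (π (φ (u t)) θ)| ≤
      (Lr1 + Lr2 * Lπ1 * Lφ) * ζ *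
          ∑ t ∈ Finset.range (T + 1),
            γ ^ t * ∑ k ∈ Finset.range t, (Lt1 + Lt2 * Lπ1 * Lφ) ^ k +
        (Lr1 + Lr2 * Lπ1 * Lφ) * ε *
          ∑ t ∈ Finset.range (T + 1), γ ^ t * (Lt1 + Lt2 * Lπ1 * Lφ) ^ t +
        Lr2 * Lπ1 * ϱ * ((1 - γ ^ (T + 1)) / (1 - γ)) := by
  intro T
  set ν := Lt1 + Lt2 * Lπ1 * Lφ with hνdef
  set lam := Lr1 + Lr2 * Lπ1 * Lφ with hlamdef
  have hν0 : 0 ≤ ν := by positivity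
  have hlam0 : 0 ≤ lam := by positivity
  have tri : ∀ a b c : S, ‖a - c‖ ≤ ‖a - b‖ + ‖b - c‖ := fun a b c => by
    simpa [sub_add_sub_cancel] using norm_add_le (a - b) (b - c)
  -- state deviation bound
  have hd : ∀ t, ‖u t - v t‖ ≤ ζ * ∑ k ∈ Finset.range t, ν ^ k + ε * ν ^ t := by
    intro t
    induction t with
    | zero => simpa using h0
    | succ t ih =>
      have hstep : ‖u (t + 1) - v (t + 1)‖ ≤ ν * ‖u t - v t‖ + ζ := by
        rw [hu, hv]
        calc ‖𝒯 (u t) (π (φ (u t)) θ) (ξ t) - 𝒯' (v t) (π (φ (v t)) θ) (ξ t)‖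
            ≤ ‖𝒯 (u t) (π (φ (u t)) θ) (ξ t) - 𝒯 (v t) (π (φ (u t)) θ) (ξ t)‖
              + ‖𝒯 (v t) (π (φ (u t)) θ) (ξ t) - 𝒯 (v t) (π (φ (v t)) θ) (ξ t)‖
              + ‖𝒯 (v t) (π (φ (v t)) θ) (ξ t) - 𝒯' (v t) (π (φ (v t)) θ) (ξ t)‖ := by
              calc ‖𝒯 (u t) (π (φ (u t)) θ) (ξ t) - 𝒯' (v t) (π (φ (v t)) θ) (ξ t)‖
                  ≤ ‖𝒯 (u t) (π (φ (u t)) θ) (ξ t) - 𝒯 (v t) (π (φ (v t)) θ) (ξ t)‖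
                    + ‖𝒯 (v t) (π (φ (v t)) θ) (ξ t) - 𝒯' (v t) (π (φ (v t)) θ) (ξ t)‖ :=
                    tri _ _ _
                _ ≤ _ := by
                    have := tri (𝒯 (u t) (π (φ (u t)) θ) (ξ t))
                      (𝒯 (v t) (π (φ (u t)) θ) (ξ t)) (𝒯 (v t) (π (φ (v t)) θ) (ξ t))
                    linarith
          _ ≤ Lt1 * ‖u t - v t‖ + Lt2 * (Lπ1 * (Lφ * ‖u t - v t‖)) + ζ := by
              have h1 := hT1 (u t) (v t) (π (φ (u t)) θ) (ξ t)
              have h2 := hT2 (v t) (π (φ (u t)) θ) (π (φ (v t)) θ) (ξ t)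
              have h3 := hTT' (v t) (π (φ (v t)) θ) (ξ t)
              have h4 := hP1 (φ (u t)) (φ (v t)) θ
              have h5 := hE (u t) (v t)
              have h6 : ‖π (φ (u t)) θ - π (φ (v t)) θ‖ ≤ Lπ1 * (Lφ * ‖u t - v t‖) := by
                calc ‖π (φ (u t)) θ - π (φ (v t)) θ‖ ≤ Lπ1 * ‖φ (u t) - φ (v t)‖ := h4
                  _ ≤ Lπ1 * (Lφ * ‖u t - v t‖) := by
                      exact mul_le_mul_of_nonneg_left (by linarith) hLπ1
              have h7 : ‖𝒯 (v t) (π (φ (u t)) θ) (ξ t) - 𝒯 (v t) (π (φ (v t)) θ) (ξ t)‖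
                  ≤ Lt2 * (Lπ1 * (Lφ * ‖u t - v t‖)) := by
                calc _ ≤ Lt2 * ‖π (φ (u t)) θ - π (φ (v t)) θ‖ := h2
                  _ ≤ _ := mul_le_mul_of_nonneg_left h6 hLt2
              linarith
          _ = ν * ‖u t - v t‖ + ζ := by rw [hνdef]; ring
      have hrec : ν * ‖u t - v t‖ + ζ
          ≤ ζ * ∑ k ∈ Finset.range (t + 1), ν ^ k + ε * ν ^ (t + 1) := by
        have := mul_le_mul_of_nonneg_left ih hν0
        rw [geom_sum_succ]
        calc ν * ‖u t - v t‖ + ζ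
            ≤ ν * (ζ * ∑ k ∈ Finset.range t, ν ^ k + ε * ν ^ t) + ζ := by linarith
          _ = ζ * (ν * ∑ k ∈ Finset.range t, ν ^ k + 1) + ε * ν ^ (t + 1) := by ring
      linarith
  -- per-step reward bound
  have hr : ∀ t, |r (v t) (π (φ (f (v t))) θ) - r (u t) (π (φ (u t)) θ)|
      ≤ lam * (ζ * ∑ k ∈ Finset.range t, ν ^ k + ε * ν ^ t) + Lr2 * Lπ1 * ϱ := by
    intro t
    have h1 : |r (v t) (π (φ (f (v t))) θ) - r (v t) (π (φ (v t)) θ)|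
        ≤ Lr2 * Lπ1 * ϱ := by
      calc _ ≤ Lr2 * ‖π (φ (f (v t))) θ - π (φ (v t)) θ‖ := hR2 _ _ _
        _ ≤ Lr2 * (Lπ1 * ϱ) := by
            refine mul_le_mul_of_nonneg_left ?_ hLr2
            calc ‖π (φ (f (v t))) θ - π (φ (v t)) θ‖ ≤ Lπ1 * ‖φ (f (v t)) - φ (v t)‖ :=
                hP1 _ _ _
              _ ≤ Lπ1 * ϱ := mul_le_mul_of_nonneg_left (hf _) hLπ1
        _ = Lr2 * Lπ1 * ϱ := by ring
    have h2 : |r (v t) (π (φ (v t)) θ) - r (v t) (π (φ (u t)) θ)|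
        ≤ Lr2 * Lπ1 * Lφ * ‖u t - v t‖ := by
      calc _ ≤ Lr2 * ‖π (φ (v t)) θ - π (φ (u t)) θ‖ := hR2 _ _ _
        _ ≤ Lr2 * (Lπ1 * (Lφ * ‖u t - v t‖)) := by
            refine mul_le_mul_of_nonneg_left ?_ hLr2
            calc ‖π (φ (v t)) θ - π (φ (u t)) θ‖ ≤ Lπ1 * ‖φ (v t) - φ (u t)‖ := hP1 _ _ _
              _ ≤ Lπ1 * (Lφ * ‖u t - v t‖) := by
                  refine mul_le_mul_of_nonneg_left ?_ hLπ1
                  have := hE (v t) (u t)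
                  rwa [norm_sub_rev (v t)] at this
        _ = Lr2 * Lπ1 * Lφ * ‖u t - v t‖ := by ring
    have h3 : |r (v t) (π (φ (u t)) θ) - r (u t) (π (φ (u t)) θ)|
        ≤ Lr1 * ‖u t - v t‖ := by
      have := hR1 (v t) (u t) (π (φ (u t)) θ)
      rwa [norm_sub_rev (v t)] at this
    have habs : |r (v t) (π (φ (f (v t))) θ) - r (u t) (π (φ (u t)) θ)|
        ≤ lam * ‖u t - v t‖ + Lr2 * Lπ1 * ϱ := by
      have := abs_sub_abs_le_abs_sub (r (v t) (π (φ (f (v t))) θ)) 0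
      have t1 := abs_sub (r (v t) (π (φ (f (v t))) θ)) (r (u t) (π (φ (u t)) θ))
      calc |r (v t) (π (φ (f (v t))) θ) - r (u t) (π (φ (u t)) θ)|
          ≤ |r (v t) (π (φ (f (v t))) θ) - r (v t) (π (φ (v t)) θ)|
            + |r (v t) (π (φ (v t)) θ) - r (v t) (π (φ (u t)) θ)|
            + |r (v t) (π (φ (u t)) θ) - r (u t) (π (φ (u t)) θ)| := by
            have a1 := abs_sub_le (r (v t) (π (φ (f (v t))) θ))
              (r (v t) (π (φ (v t)) θ)) (r (u t) (π (φ (u t)) θ))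
            have a2 := abs_sub_le (r (v t) (π (φ (v t)) θ))
              (r (v t) (π (φ (u t)) θ)) (r (u t) (π (φ (u t)) θ))
            linarith
        _ ≤ lam * ‖u t - v t‖ + Lr2 * Lπ1 * ϱ := by
            rw [hlamdef]; nlinarith [norm_nonneg (u t - v t)]
    have hdt := hd t
    have := mul_le_mul_of_nonneg_left hdt hlam0
    linarith [habs, this]
  -- combine
  have hsum : |∑ t ∈ Finset.range (T + 1), γ ^ t * r (v t) (π (φ (f (v t))) θ) -
      ∑ t ∈ Finset.range (T + 1), γ ^ t * r (u t) (π (φ (u t)) θ)|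
      ≤ ∑ t ∈ Finset.range (T + 1),
          γ ^ t * (lam * (ζ * ∑ k ∈ Finset.range t, ν ^ k + ε * ν ^ t) + Lr2 * Lπ1 * ϱ) := by
    rw [← Finset.sum_sub_distrib]
    refine (Finset.abs_sum_le_sum_abs _ _).trans (Finset.sum_le_sum fun t _ => ?_)
    rw [← mul_sub, abs_mul, abs_pow, abs_of_nonneg hγ0]
    exact mul_le_mul_of_nonneg_left (hr t) (pow_nonneg hγ0 t)
  have hgeo : ∑ t ∈ Finset.range (T + 1), γ ^ t = (1 - γ ^ (T + 1)) / (1 - γ) := by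
    rw [geom_sum_eq (by linarith : γ ≠ 1)]
    rw [div_eq_div_iff (by linarith) (by linarith)]
    ring
  calc _ ≤ ∑ t ∈ Finset.range (T + 1),
        γ ^ t * (lam * (ζ * ∑ k ∈ Finset.range t, ν ^ k + ε * ν ^ t) + Lr2 * Lπ1 * ϱ) :=
        hsum
    _ = lam * ζ * ∑ t ∈ Finset.range (T + 1), γ ^ t * ∑ k ∈ Finset.range t, ν ^ k
        + lam * ε * ∑ t ∈ Finset.range (T + 1), γ ^ t * ν ^ t
        + Lr2 * Lπ1 * ϱ * ∑ t ∈ Finset.range (T + 1), γ ^ t := by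
        rw [Finset.mul_sum, Finset.mul_sum, Finset.mul_sum, ← Finset.sum_add_distrib,
          ← Finset.sum_add_distrib]
        exact Finset.sum_congr rfl fun t _ => by ring
    _ = _ := by rw [hgeo]
end

section
/- Under hypotheses (T1), (T2), (P1), (R1), (R2), (E), suppose 0 ≤ γ < 1, let 𝒯, 𝒯' : S × A × Ξ → S satisfy ‖𝒯(s,a,ξ) − 𝒯'(s,a,ξ)‖ ≤ ζ for all s, a, ξ (𝒯 satisfying (T1), (T2)), and let f : S → S be a distractor with ‖φ(f(x)) − φ(x)‖ ≤ ϱ for all x ∈ S. Let (Ω, μ) be a probability space, ξ_t : Ω → Ξ (t ∈ ℕ) and u_0, v_0 : Ω → S with ‖u_0(ω) − v_0(ω)‖ ≤ ε for all ω, and define ω-wise trajectories u(ω), v(ω) : ℕ → S by u(ω)(0) = u_0(ω), u(ω)(t+1) = 𝒯(u(ω)(t), π(φ(u(ω)(t)),θ), ξ_t(ω)) and v(ω)(0) = v_0(ω), v(ω)(t+1) = 𝒯'(v(ω)(t), π(φ(v(ω)(t)),θ), ξ_t(ω)). If for each t ≤ T the functions ω ↦ r(v(ω)(t), π(φ(f(v(ω)(t))),θ))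 and ω ↦ r(u(ω)(t), π(φ(u(ω)(t)),θ)) are μ-integrable, then |∫ Σ_{t=0}^{T} γ^t r(v(ω)(t), π(φ(f(v(ω)(t))),θ)) dμ(ω) − ∫ Σ_{t=0}^{T} γ^t r(u(ω)(t), π(φ(u(ω)(t)),θ)) dμ(ω)| ≤ λ·ζ·Σ_{t=0}^{T} γ^t Σ_{k=0}^{t−1} ν^k + λ·ε·Σ_{t=0}^{T} γ^t ν^t + L_{r2}·L_{π1}·ϱ·(1−γ^{T+1})/(1−γ), where ν = L_{t1} + L_{t2}·L_{π1}·L_φ and λ = L_{r1} + L_{r2}·L_{π1}·L_φ. -/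
open MeasureTheory

/-- Theorem: expected performance shift between the training environment (ω-wise
trajectory u, no distractor) and the testing environment (ω-wise trajectory v,
distractor f). -/
theorem train_test_fixed_policy_shift_expectation
    {S Φ A Θ Ξ : Type*}
    [NormedAddCommGroup S] [NormedSpace ℝ S]
    [NormedAddCommGroup Φ] [NormedSpace ℝ Φ]
    [NormedAddCommGroup A] [NormedSpace ℝ A]
    [NormedAddCommGroup Θ] [NormedSpace ℝ Θ]
    (φ : S → Φ) (π : Φ → Θ → A) (r : S → A → ℝ) (𝒯 𝒯' : S → A → Ξ → S)
    (Lt1 Lt2 Lπ1 Lr1 Lr2 Lφ : ℝ)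
    (hLt1 : 0 ≤ Lt1) (hLt2 : 0 ≤ Lt2) (hLπ1 : 0 ≤ Lπ1)
    (hLr1 : 0 ≤ Lr1) (hLr2 : 0 ≤ Lr2) (hLφ : 0 ≤ Lφ)
    (hT1 : ∀ (s s' : S) (a : A) (ξ : Ξ), ‖𝒯 s a ξ - 𝒯 s' a ξ‖ ≤ Lt1 * ‖s - s'‖)
    (hT2 : ∀ (s : S) (a a' : A) (ξ : Ξ), ‖𝒯 s a ξ - 𝒯 s a' ξ‖ ≤ Lt2 * ‖a - a'‖)
    (hP1 : ∀ (x y : Φ) (θ : Θ), ‖π x θ - π y θ‖ ≤ Lπ1 * ‖x - y‖)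
    (hR1 : ∀ (s s' : S) (a : A), |r s a - r s' a| ≤ Lr1 * ‖s - s'‖)
    (hR2 : ∀ (s : S) (a a' : A), |r s a - r s a'| ≤ Lr2 * ‖a - a'‖)
    (hE : ∀ s s' : S, ‖φ s - φ s'‖ ≤ Lφ * ‖s - s'‖)
    (γ : ℝ) (hγ0 : 0 ≤ γ) (hγ1 : γ < 1)
    (ε ζ ϱ : ℝ) (hε : 0 ≤ ε) (hζ : 0 ≤ ζ) (hϱ : 0 ≤ ϱ)
    (hTT' : ∀ (s : S) (a : A) (ξ : Ξ), ‖𝒯 s a ξ - 𝒯' s a ξ‖ ≤ ζ)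
    (f : S → S) (hf : ∀ x : S, ‖φ (f x) - φ x‖ ≤ ϱ)
    {Ω : Type*} [MeasurableSpace Ω] (μ : Measure Ω) [IsProbabilityMeasure μ]
    (ξ : ℕ → Ω → Ξ) (θ : Θ) (u₀ v₀ : Ω → S)
    (h0 : ∀ ω : Ω, ‖u₀ ω - v₀ ω‖ ≤ ε)
    (u v : Ω → ℕ → S)
    (hu0 : ∀ ω, u ω 0 = u₀ ω)
    (hu : ∀ ω t, u ω (t + 1) = 𝒯 (u ω t) (π (φ (u ω t)) θ) (ξ t ω))
    (hv0 : ∀ ω, v ω 0 = v₀ ω)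
    (hv : ∀ ω t, v ω (t + 1) = 𝒯' (v ω t) (π (φ (v ω t)) θ) (ξ t ω))
    (T : ℕ)
    (hInt1 : ∀ t ≤ T, Integrable (fun ω => r (v ω t) (π (φ (f (v ω t))) θ)) μ)
    (hInt2 : ∀ t ≤ T, Integrable (fun ω => r (u ω t) (π (φ (u ω t)) θ)) μ) :
    |(∫ ω, ∑ t ∈ Finset.range (T + 1), γ ^ t * r (v ω t) (π (φ (f (v ω t))) θ) ∂μ) -
      ∫ ω, ∑ t ∈ Finset.range (T + 1), γ ^ t * r (u ω t) (π (φ (u ω t)) θ) ∂μ| ≤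
    (Lr1 + Lr2 * Lπ1 * Lφ) * ζ *
        ∑ t ∈ Finset.range (T + 1),
          γ ^ t * ∑ k ∈ Finset.range t, (Lt1 + Lt2 * Lπ1 * Lφ) ^ k +
      (Lr1 + Lr2 * Lπ1 * Lφ) * ε *
        ∑ t ∈ Finset.range (T + 1), γ ^ t * (Lt1 + Lt2 * Lπ1 * Lφ) ^ t +
      Lr2 * Lπ1 * ϱ * ((1 - γ ^ (T + 1)) / (1 - γ)) := by
  set ν := Lt1 + Lt2 * Lπ1 * Lφ with hνdef
  set lam := Lr1 + Lr2 * Lπ1 * Lφ with hlamdef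
  have hν : 0 ≤ ν := by positivity
  have hlam : 0 ≤ lam := by positivity
  -- trajectory divergence bound
  have hd : ∀ ω t, ‖u ω t - v ω t‖ ≤ ε * ν ^ t + ζ * ∑ k ∈ Finset.range t, ν ^ k := by
    intro ω t
    induction t with
    | zero => simpa [hu0, hv0] using h0 ω
    | succ t ih =>
      have step : ‖u ω (t + 1) - v ω (t + 1)‖ ≤ ν * ‖u ω t - v ω t‖ + ζ := by
        rw [hu, hv]
        have h1 := hT1 (u ω t) (v ω t) (π (φ (u ω t)) θ) (ξ t ω)
        have h2 := hT2 (v ω t) (π (φ (u ω t)) θ) (π (φ (v ω t)) θ) (ξ t ω)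
        have h3 := hTT' (v ω t) (π (φ (v ω t)) θ) (ξ t ω)
        have hπ : ‖π (φ (u ω t)) θ - π (φ (v ω t)) θ‖ ≤ Lπ1 * (Lφ * ‖u ω t - v ω t‖) := by
          calc ‖π (φ (u ω t)) θ - π (φ (v ω t)) θ‖ ≤ Lπ1 * ‖φ (u ω t) - φ (v ω t)‖ :=
                hP1 _ _ _
            _ ≤ Lπ1 * (Lφ * ‖u ω t - v ω t‖) := by
                exact mul_le_mul_of_nonneg_left (hE _ _) hLπ1
        calc ‖𝒯 (u ω t) (π (φ (u ω t)) θ) (ξ t ω) - 𝒯' (v ω t) (π (φ (v ω t)) θ) (ξ t ω)‖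
            ≤ ‖𝒯 (u ω t) (π (φ (u ω t)) θ) (ξ t ω) - 𝒯 (v ω t) (π (φ (u ω t)) θ) (ξ t ω)‖ +
              ‖𝒯 (v ω t) (π (φ (u ω t)) θ) (ξ t ω) - 𝒯 (v ω t) (π (φ (v ω t)) θ) (ξ t ω)‖ +
              ‖𝒯 (v ω t) (π (φ (v ω t)) θ) (ξ t ω) - 𝒯' (v ω t) (π (φ (v ω t)) θ) (ξ t ω)‖ := by
                have := norm_sub_le_norm_sub_add_norm_sub
                  (𝒯 (u ω t) (π (φ (u ω t)) θ) (ξ t ω))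
                  (𝒯 (v ω t) (π (φ (u ω t)) θ) (ξ t ω))
                  (𝒯' (v ω t) (π (φ (v ω t)) θ) (ξ t ω))
                have := norm_sub_le_norm_sub_add_norm_sub
                  (𝒯 (v ω t) (π (φ (u ω t)) θ) (ξ t ω))
                  (𝒯 (v ω t) (π (φ (v ω t)) θ) (ξ t ω))
                  (𝒯' (v ω t) (π (φ (v ω t)) θ) (ξ t ω))
                linarith
          _ ≤ Lt1 * ‖u ω t - v ω t‖ + Lt2 * (Lπ1 * (Lφ * ‖u ω t - v ω t‖)) + ζ := by
                have := mul_le_mul_of_nonneg_left hπ hLt2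
                linarith [h1, h3, h2.trans this]
          _ = ν * ‖u ω t - v ω t‖ + ζ := by rw [hνdef]; ring
      calc ‖u ω (t + 1) - v ω (t + 1)‖ ≤ ν * ‖u ω t - v ω t‖ + ζ := step
        _ ≤ ν * (ε * ν ^ t + ζ * ∑ k ∈ Finset.range t, ν ^ k) + ζ := by
            have := mul_le_mul_of_nonneg_left ih hν
            linarith
        _ = ε * ν ^ (t + 1) + ζ * ∑ k ∈ Finset.range (t + 1), ν ^ k := by
            rw [geom_sum_succ]; ring
  -- per-step reward difference bound
  have hr : ∀ ω t, |r (v ω t) (π (φ (f (v ω t))) θ) - r (u ω t) (π (φ (u ω t)) θ)| ≤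
      lam * ‖u ω t - v ω t‖ + Lr2 * Lπ1 * ϱ := by
    intro ω t
    have h1 : |r (v ω t) (π (φ (f (v ω t))) θ) - r (v ω t) (π (φ (v ω t)) θ)| ≤
        Lr2 * Lπ1 * ϱ := by
      calc |r (v ω t) (π (φ (f (v ω t))) θ) - r (v ω t) (π (φ (v ω t)) θ)|
          ≤ Lr2 * ‖π (φ (f (v ω t))) θ - π (φ (v ω t)) θ‖ := hR2 _ _ _
        _ ≤ Lr2 * (Lπ1 * ϱ) := by
            refine mul_le_mul_of_nonneg_left ?_ hLr2
            exact (hP1 _ _ _).trans (mul_le_mul_of_nonneg_left (hf _) hLπ1)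
        _ = Lr2 * Lπ1 * ϱ := by ring
    have h2 : |r (v ω t) (π (φ (v ω t)) θ) - r (u ω t) (π (φ (v ω t)) θ)| ≤
        Lr1 * ‖u ω t - v ω t‖ := by
      have := hR1 (v ω t) (u ω t) (π (φ (v ω t)) θ)
      rwa [norm_sub_rev] at this
    have h3 : |r (u ω t) (π (φ (v ω t)) θ) - r (u ω t) (π (φ (u ω t)) θ)| ≤
        Lr2 * Lπ1 * Lφ * ‖u ω t - v ω t‖ := by
      calc |r (u ω t) (π (φ (v ω t)) θ) - r (u ω t) (π (φ (u ω t)) θ)|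
          ≤ Lr2 * ‖π (φ (v ω t)) θ - π (φ (u ω t)) θ‖ := hR2 _ _ _
        _ ≤ Lr2 * (Lπ1 * (Lφ * ‖v ω t - u ω t‖)) := by
            refine mul_le_mul_of_nonneg_left ?_ hLr2
            exact (hP1 _ _ _).trans (mul_le_mul_of_nonneg_left (hE _ _) hLπ1)
        _ = Lr2 * Lπ1 * Lφ * ‖u ω t - v ω t‖ := by rw [norm_sub_rev]; ring
    have tri : |r (v ω t) (π (φ (f (v ω t))) θ) - r (u ω t) (π (φ (u ω t)) θ)| ≤
        |r (v ω t) (π (φ (f (v ω t))) θ) - r (v ω t) (π (φ (v ω t)) θ)| +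
        |r (v ω t) (π (φ (v ω t)) θ) - r (u ω t) (π (φ (v ω t)) θ)| +
        |r (u ω t) (π (φ (v ω t)) θ) - r (u ω t) (π (φ (u ω t)) θ)| := by
      have := abs_sub_le (r (v ω t) (π (φ (f (v ω t))) θ)) (r (v ω t) (π (φ (v ω t)) θ))
        (r (u ω t) (π (φ (u ω t)) θ))
      have := abs_sub_le (r (v ω t) (π (φ (v ω t)) θ)) (r (u ω t) (π (φ (v ω t)) θ))
        (r (u ω t) (π (φ (u ω t)) θ))
      linarith
    calc |r (v ω t) (π (φ (f (v ω t))) θ) - r (u ω t) (π (φ (u ω t)) θ)|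
        ≤ Lr2 * Lπ1 * ϱ + Lr1 * ‖u ω t - v ω t‖ + Lr2 * Lπ1 * Lφ * ‖u ω t - v ω t‖ := by
          linarith
      _ = lam * ‖u ω t - v ω t‖ + Lr2 * Lπ1 * ϱ := by rw [hlamdef]; ring
  -- geometric sum
  have hG : ∑ t ∈ Finset.range (T + 1), γ ^ t = (1 - γ ^ (T + 1)) / (1 - γ) := by
    rw [geom_sum_eq (ne_of_lt hγ1),
      show (1 - γ ^ (T + 1)) = -(γ ^ (T + 1) - 1) by ring, show (1 - γ) = -(γ - 1) by ring,
      neg_div_neg_eq]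
  set C := lam * ζ * ∑ t ∈ Finset.range (T + 1), γ ^ t * ∑ k ∈ Finset.range t, ν ^ k +
      lam * ε * ∑ t ∈ Finset.range (T + 1), γ ^ t * ν ^ t +
      Lr2 * Lπ1 * ϱ * ((1 - γ ^ (T + 1)) / (1 - γ)) with hCdef
  -- pointwise bound on the sums
  have hpt : ∀ ω, |(∑ t ∈ Finset.range (T + 1), γ ^ t * r (v ω t) (π (φ (f (v ω t))) θ)) -
      ∑ t ∈ Finset.range (T + 1), γ ^ t * r (u ω t) (π (φ (u ω t)) θ)| ≤ C := by
    intro ω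
    rw [← Finset.sum_sub_distrib]
    calc |∑ t ∈ Finset.range (T + 1), (γ ^ t * r (v ω t) (π (φ (f (v ω t))) θ) -
            γ ^ t * r (u ω t) (π (φ (u ω t)) θ))|
        ≤ ∑ t ∈ Finset.range (T + 1), |γ ^ t * r (v ω t) (π (φ (f (v ω t))) θ) -
            γ ^ t * r (u ω t) (π (φ (u ω t)) θ)| := Finset.abs_sum_le_sum_abs _ _
      _ ≤ ∑ t ∈ Finset.range (T + 1), γ ^ t * (lam * ζ * ∑ k ∈ Finset.range t, ν ^ k +
            lam * ε * ν ^ t + Lr2 * Lπ1 * ϱ) := by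
          refine Finset.sum_le_sum fun t _ => ?_
          rw [← mul_sub, abs_mul, abs_pow, abs_of_nonneg hγ0]
          have h1 : γ ^ t * |r (v ω t) (π (φ (f (v ω t))) θ) - r (u ω t) (π (φ (u ω t)) θ)| ≤
              γ ^ t * (lam * ‖u ω t - v ω t‖ + Lr2 * Lπ1 * ϱ) :=
            mul_le_mul_of_nonneg_left (hr ω t) (by positivity)
          refine h1.trans ?_
          refine mul_le_mul_of_nonneg_left ?_ (by positivity)
          have h2 : lam * ‖u ω t - v ω t‖ ≤
              lam * (ε * ν ^ t + ζ * ∑ k ∈ Finset.range t, ν ^ k) :=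
            mul_le_mul_of_nonneg_left (hd ω t) hlam
          linarith
      _ = C := by
          rw [hCdef, ← hG, Finset.mul_sum, Finset.mul_sum, Finset.mul_sum,
            ← Finset.sum_add_distrib, ← Finset.sum_add_distrib]
          exact Finset.sum_congr rfl fun t _ => by ring
  -- integrability of the two sums
  have hI1 : Integrable (fun ω => ∑ t ∈ Finset.range (T + 1),
      γ ^ t * r (v ω t) (π (φ (f (v ω t))) θ)) μ := by
    apply integrable_finset_sum
    intro t ht
    exact (hInt1 t (Nat.lt_succ_iff.mp (Finset.mem_range.mp ht))).const_mul _
  have hI2 : Integrable (fun ω => ∑ t ∈ Finset.range (T + 1),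
      γ ^ t * r (u ω t) (π (φ (u ω t)) θ)) μ := by
    apply integrable_finset_sum
    intro t ht
    exact (hInt2 t (Nat.lt_succ_iff.mp (Finset.mem_range.mp ht))).const_mul _
  rw [← integral_sub hI1 hI2]
  calc |∫ ω, ((∑ t ∈ Finset.range (T + 1), γ ^ t * r (v ω t) (π (φ (f (v ω t))) θ)) -
          ∑ t ∈ Finset.range (T + 1), γ ^ t * r (u ω t) (π (φ (u ω t)) θ)) ∂μ|
      ≤ ∫ ω, |(∑ t ∈ Finset.range (T + 1), γ ^ t * r (v ω t) (π (φ (f (v ω t))) θ)) -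
          ∑ t ∈ Finset.range (T + 1), γ ^ t * r (u ω t) (π (φ (u ω t)) θ)| ∂μ :=
        by simpa using norm_integral_le_integral_norm (μ := μ) (f := fun ω => (∑ t ∈ Finset.range (T + 1), γ ^ t * r (v ω t) (π (φ (f (v ω t))) θ)) - ∑ t ∈ Finset.range (T + 1), γ ^ t * r (u ω t) (π (φ (u ω t)) θ))
    _ ≤ ∫ _, C ∂μ := integral_mono (hI1.sub hI2).abs (integrable_const C) fun ω => hpt ω
    _ = C := by simp
end

section
/- Under hypotheses (T1), (T2), (P1), (P2), (E), let u, v : ℕ → S be trajectories with the same transition function 𝒯, same noise sequence ξ, same initial state u(0) = v(0), but different parameters θ, θ' ∈ Θ, i.e. u(t+1) = 𝒯(u(t), π(φ(u(t)),θ), ξ(t)) and v(t+1) = 𝒯(v(t), π(φ(v(t)),θ'), ξ(t)). Then for all t ∈ ℕ: ‖u(t) − v(t)‖ ≤ L_{t2}·L_{π2}·(Σ_{k=0}^{t−1} ν^k)·‖θ − θ'‖, where ν = L_{t1} + L_{t2}·L_{π1}·L_φ. -/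
/-- Lemma: same transition, same noise, same initial state but different policy
parameters: state deviation ≤ L_{t2}·L_{π2}·(Σ_{k<t} ν^k)·‖θ − θ'‖. -/
theorem state_deviation_different_parameters
    {S Φ A Θ Ξ : Type*}
    [NormedAddCommGroup S] [NormedSpace ℝ S]
    [NormedAddCommGroup Φ] [NormedSpace ℝ Φ]
    [NormedAddCommGroup A] [NormedSpace ℝ A]
    [NormedAddCommGroup Θ] [NormedSpace ℝ Θ]
    (φ : S → Φ) (π : Φ → Θ → A) (𝒯 : S → A → Ξ → S)
    (Lt1 Lt2 Lπ1 Lπ2 Lφ : ℝ)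
    (hLt1 : 0 ≤ Lt1) (hLt2 : 0 ≤ Lt2) (hLπ1 : 0 ≤ Lπ1) (hLπ2 : 0 ≤ Lπ2)
    (hLφ : 0 ≤ Lφ)
    (hT1 : ∀ (s s' : S) (a : A) (ξ : Ξ), ‖𝒯 s a ξ - 𝒯 s' a ξ‖ ≤ Lt1 * ‖s - s'‖)
    (hT2 : ∀ (s : S) (a a' : A) (ξ : Ξ), ‖𝒯 s a ξ - 𝒯 s a' ξ‖ ≤ Lt2 * ‖a - a'‖)
    (hP1 : ∀ (x y : Φ) (θ : Θ), ‖π x θ - π y θ‖ ≤ Lπ1 * ‖x - y‖)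
    (hP2 : ∀ (x : Φ) (θ θ' : Θ), ‖π x θ - π x θ'‖ ≤ Lπ2 * ‖θ - θ'‖)
    (hE : ∀ s s' : S, ‖φ s - φ s'‖ ≤ Lφ * ‖s - s'‖)
    (ξ : ℕ → Ξ) (θ θ' : Θ) (u v : ℕ → S)
    (hu : ∀ t, u (t + 1) = 𝒯 (u t) (π (φ (u t)) θ) (ξ t))
    (hv : ∀ t, v (t + 1) = 𝒯 (v t) (π (φ (v t)) θ') (ξ t))
    (h0 : u 0 = v 0) :
    ∀ t : ℕ, ‖u t - v t‖ ≤
      Lt2 * Lπ2 * (∑ k ∈ Finset.range t, (Lt1 + Lt2 * Lπ1 * Lφ) ^ k) * ‖θ - θ'‖ := by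

  intro t
  induction t with
  | zero => simp [h0]
  | succ t ih =>
    set ν := Lt1 + Lt2 * Lπ1 * Lφ with hν
    have hν0 : 0 ≤ ν := by positivity
    have step : ‖u (t+1) - v (t+1)‖ ≤ ν * ‖u t - v t‖ + Lt2 * Lπ2 * ‖θ - θ'‖ := by
      rw [hu t, hv t]
      calc ‖𝒯 (u t) (π (φ (u t)) θ) (ξ t) - 𝒯 (v t) (π (φ (v t)) θ') (ξ t)‖
          ≤ ‖𝒯 (u t) (π (φ (u t)) θ) (ξ t) - 𝒯 (v t) (π (φ (u t)) θ) (ξ t)‖ +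
            ‖𝒯 (v t) (π (φ (u t)) θ) (ξ t) - 𝒯 (v t) (π (φ (v t)) θ') (ξ t)‖ :=
            norm_sub_le_norm_sub_add_norm_sub _ _ _
        _ ≤ Lt1 * ‖u t - v t‖ + Lt2 * ‖π (φ (u t)) θ - π (φ (v t)) θ'‖ :=
            add_le_add (hT1 _ _ _ _) (hT2 _ _ _ _)
        _ ≤ Lt1 * ‖u t - v t‖ + Lt2 * (Lπ1 * (Lφ * ‖u t - v t‖) + Lπ2 * ‖θ - θ'‖) := by
            gcongr
            calc ‖π (φ (u t)) θ - π (φ (v t)) θ'‖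
                ≤ ‖π (φ (u t)) θ - π (φ (v t)) θ‖ + ‖π (φ (v t)) θ - π (φ (v t)) θ'‖ :=
                  norm_sub_le_norm_sub_add_norm_sub _ _ _
              _ ≤ Lπ1 * (Lφ * ‖u t - v t‖) + Lπ2 * ‖θ - θ'‖ := by
                  gcongr
                  · calc ‖π (φ (u t)) θ - π (φ (v t)) θ‖ ≤ Lπ1 * ‖φ (u t) - φ (v t)‖ :=
                        hP1 _ _ _
                      _ ≤ Lπ1 * (Lφ * ‖u t - v t‖) := by gcongr; exact hE _ _
                  · exact hP2 _ _ _
        _ = ν * ‖u t - v t‖ + Lt2 * Lπ2 * ‖θ - θ'‖ := by ring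
    calc ‖u (t+1) - v (t+1)‖ ≤ ν * ‖u t - v t‖ + Lt2 * Lπ2 * ‖θ - θ'‖ := step
      _ ≤ ν * (Lt2 * Lπ2 * (∑ k ∈ Finset.range t, ν ^ k) * ‖θ - θ'‖) +
          Lt2 * Lπ2 * ‖θ - θ'‖ := by gcongr
      _ = Lt2 * Lπ2 * (∑ k ∈ Finset.range (t+1), ν ^ k) * ‖θ - θ'‖ := by
          rw [geom_sum_succ]
          ring
end

section
/- Under hypotheses (T1), (T2), (P1), (P2), (R1), (R2), (E), let u, v : ℕ → S be trajectories with the same transition function 𝒯, same noise sequence ξ, same initial state u(0) = v(0), but different parameters θ, θ' ∈ Θ, i.e. u(t+1) = 𝒯(u(t), π(φ(u(t)),θ), ξ(t)) and v(t+1) = 𝒯(v(t), π(φ(v(t)),θ'), ξ(t)). Then for every T ∈ ℕ and γ ≥ 0: |Σ_{t=0}^{T} γ^t r(u(t), π(φ(u(t)),θ)) − Σ_{t=0}^{T} γ^t r(v(t), π(φ(v(t)),θ'))| ≤ L_J·‖θ − θ'‖, where L_J = Σ_{t=0}^{T} γ^t (λ·L_{t2}·L_{π2}·Σ_{k=0}^{t−1}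 ν^k + L_{r2}·L_{π2}), ν = L_{t1} + L_{t2}·L_{π1}·L_φ, and λ = L_{r1} + L_{r2}·L_{π1}·L_φ. -/
/-- Lemma: the empirical return is Lipschitz in the policy parameter. -/
theorem return_lipschitz_in_parameters
    {S Φ A Θ Ξ : Type*}
    [NormedAddCommGroup S] [NormedSpace ℝ S]
    [NormedAddCommGroup Φ] [NormedSpace ℝ Φ]
    [NormedAddCommGroup A] [NormedSpace ℝ A]
    [NormedAddCommGroup Θ] [NormedSpace ℝ Θ]
    (φ : S → Φ) (π : Φ → Θ → A) (𝒯 : S → A → Ξ → S) (r : S → A → ℝ)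
    (Lt1 Lt2 Lπ1 Lπ2 Lr1 Lr2 Lφ : ℝ)
    (hLt1 : 0 ≤ Lt1) (hLt2 : 0 ≤ Lt2) (hLπ1 : 0 ≤ Lπ1) (hLπ2 : 0 ≤ Lπ2)
    (hLr1 : 0 ≤ Lr1) (hLr2 : 0 ≤ Lr2) (hLφ : 0 ≤ Lφ)
    (hT1 : ∀ (s s' : S) (a : A) (ξ : Ξ), ‖𝒯 s a ξ - 𝒯 s' a ξ‖ ≤ Lt1 * ‖s - s'‖)
    (hT2 : ∀ (s : S) (a a' : A) (ξ : Ξ), ‖𝒯 s a ξ - 𝒯 s a' ξ‖ ≤ Lt2 * ‖a - a'‖)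
    (hP1 : ∀ (x y : Φ) (θ : Θ), ‖π x θ - π y θ‖ ≤ Lπ1 * ‖x - y‖)
    (hP2 : ∀ (x : Φ) (θ θ' : Θ), ‖π x θ - π x θ'‖ ≤ Lπ2 * ‖θ - θ'‖)
    (hR1 : ∀ (s s' : S) (a : A), |r s a - r s' a| ≤ Lr1 * ‖s - s'‖)
    (hR2 : ∀ (s : S) (a a' : A), |r s a - r s a'| ≤ Lr2 * ‖a - a'‖)
    (hE : ∀ s s' : S, ‖φ s - φ s'‖ ≤ Lφ * ‖s - s'‖)
    (ξ : ℕ → Ξ) (θ θ' : Θ) (u v : ℕ → S)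
    (hu : ∀ t, u (t + 1) = 𝒯 (u t) (π (φ (u t)) θ) (ξ t))
    (hv : ∀ t, v (t + 1) = 𝒯 (v t) (π (φ (v t)) θ') (ξ t))
    (h0 : u 0 = v 0) :
    ∀ (T : ℕ) (γ : ℝ), 0 ≤ γ →
      |∑ t ∈ Finset.range (T + 1), γ ^ t * r (u t) (π (φ (u t)) θ) -
        ∑ t ∈ Finset.range (T + 1), γ ^ t * r (v t) (π (φ (v t)) θ')| ≤
      (∑ t ∈ Finset.range (T + 1),
          γ ^ t * ((Lr1 + Lr2 * Lπ1 * Lφ) * Lt2 * Lπ2 *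
              (∑ k ∈ Finset.range t, (Lt1 + Lt2 * Lπ1 * Lφ) ^ k) +
            Lr2 * Lπ2)) * ‖θ - θ'‖ := by
  intro T γ hγ
  set ν := Lt1 + Lt2 * Lπ1 * Lφ with hν
  -- action deviation bound
  have hact : ∀ t : ℕ, ‖π (φ (u t)) θ - π (φ (v t)) θ'‖ ≤
      Lπ1 * Lφ * ‖u t - v t‖ + Lπ2 * ‖θ - θ'‖ := by
    intro t
    calc ‖π (φ (u t)) θ - π (φ (v t)) θ'‖
        ≤ ‖π (φ (u t)) θ - π (φ (v t)) θ‖ + ‖π (φ (v t)) θ - π (φ (v t)) θ'‖ :=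
          norm_sub_le_norm_sub_add_norm_sub _ _ _
      _ ≤ Lπ1 * ‖φ (u t) - φ (v t)‖ + Lπ2 * ‖θ - θ'‖ :=
          add_le_add (hP1 _ _ _) (hP2 _ _ _)
      _ ≤ Lπ1 * (Lφ * ‖u t - v t‖) + Lπ2 * ‖θ - θ'‖ := by
          gcongr; exact hE _ _
      _ = Lπ1 * Lφ * ‖u t - v t‖ + Lπ2 * ‖θ - θ'‖ := by ring
  -- state deviation bound
  have hstate : ∀ t : ℕ, ‖u t - v t‖ ≤
      Lt2 * Lπ2 * (∑ k ∈ Finset.range t, ν ^ k) * ‖θ - θ'‖ := by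
    intro t
    induction t with
    | zero => simp [h0]
    | succ t ih =>
      have h1 : ‖u (t + 1) - v (t + 1)‖ ≤
          Lt1 * ‖u t - v t‖ + Lt2 * ‖π (φ (u t)) θ - π (φ (v t)) θ'‖ := by
        rw [hu t, hv t]
        calc ‖𝒯 (u t) (π (φ (u t)) θ) (ξ t) - 𝒯 (v t) (π (φ (v t)) θ') (ξ t)‖
            ≤ ‖𝒯 (u t) (π (φ (u t)) θ) (ξ t) - 𝒯 (v t) (π (φ (u t)) θ) (ξ t)‖ +
              ‖𝒯 (v t) (π (φ (u t)) θ) (ξ t) - 𝒯 (v t) (π (φ (v t)) θ') (ξ t)‖ :=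
              norm_sub_le_norm_sub_add_norm_sub _ _ _
          _ ≤ Lt1 * ‖u t - v t‖ + Lt2 * ‖π (φ (u t)) θ - π (φ (v t)) θ'‖ :=
              add_le_add (hT1 _ _ _ _) (hT2 _ _ _ _)
      have h2 : ‖u (t + 1) - v (t + 1)‖ ≤
          ν * ‖u t - v t‖ + Lt2 * Lπ2 * ‖θ - θ'‖ := by
        refine h1.trans ?_
        have := hact t
        nlinarith [norm_nonneg (u t - v t), norm_nonneg (θ - θ')]
      have hν0 : 0 ≤ ν := by positivity
      calc ‖u (t + 1) - v (t + 1)‖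
          ≤ ν * (Lt2 * Lπ2 * (∑ k ∈ Finset.range t, ν ^ k) * ‖θ - θ'‖) +
            Lt2 * Lπ2 * ‖θ - θ'‖ := by
            refine h2.trans ?_
            gcongr
        _ = Lt2 * Lπ2 * (ν * (∑ k ∈ Finset.range t, ν ^ k) + 1) * ‖θ - θ'‖ := by ring
        _ = Lt2 * Lπ2 * (∑ k ∈ Finset.range (t + 1), ν ^ k) * ‖θ - θ'‖ := by
            rw [geom_sum_succ]
  -- per-step reward bound
  have hrew : ∀ t : ℕ, |r (u t) (π (φ (u t)) θ) - r (v t) (π (φ (v t)) θ')| ≤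
      ((Lr1 + Lr2 * Lπ1 * Lφ) * Lt2 * Lπ2 * (∑ k ∈ Finset.range t, ν ^ k) +
        Lr2 * Lπ2) * ‖θ - θ'‖ := by
    intro t
    have h1 : |r (u t) (π (φ (u t)) θ) - r (v t) (π (φ (v t)) θ')| ≤
        Lr1 * ‖u t - v t‖ + Lr2 * ‖π (φ (u t)) θ - π (φ (v t)) θ'‖ := by
      calc |r (u t) (π (φ (u t)) θ) - r (v t) (π (φ (v t)) θ')|
          ≤ |r (u t) (π (φ (u t)) θ) - r (v t) (π (φ (u t)) θ)| +
            |r (v t) (π (φ (u t)) θ) - r (v t) (π (φ (v t)) θ')| :=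
            abs_sub_le _ _ _
        _ ≤ Lr1 * ‖u t - v t‖ + Lr2 * ‖π (φ (u t)) θ - π (φ (v t)) θ'‖ :=
            add_le_add (hR1 _ _ _) (hR2 _ _ _)
    have h2 : |r (u t) (π (φ (u t)) θ) - r (v t) (π (φ (v t)) θ')| ≤
        (Lr1 + Lr2 * Lπ1 * Lφ) * ‖u t - v t‖ + Lr2 * Lπ2 * ‖θ - θ'‖ := by
      refine h1.trans ?_
      have := hact t
      nlinarith [norm_nonneg (u t - v t), norm_nonneg (θ - θ')]
    refine h2.trans ?_
    have hs := hstate t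
    have hS : (0:ℝ) ≤ ∑ k ∈ Finset.range t, ν ^ k :=
      Finset.sum_nonneg fun k _ => pow_nonneg (by positivity) k
    nlinarith [norm_nonneg (θ - θ'), norm_nonneg (u t - v t),
      mul_le_mul_of_nonneg_left hs (by positivity : (0:ℝ) ≤ Lr1 + Lr2 * Lπ1 * Lφ)]
  rw [← Finset.sum_sub_distrib, Finset.sum_mul]
  refine (Finset.abs_sum_le_sum_abs _ _).trans (Finset.sum_le_sum fun t _ => ?_)
  rw [← mul_sub, abs_mul, abs_pow, abs_of_nonneg hγ, mul_assoc]
  exact mul_le_mul_of_nonneg_left (hrew t) (pow_nonneg hγ t)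
end

section
/- (Massart-type lemma.) Let n ≥ 1 and let A be a nonempty finite set of vectors in ℝ^n. Then the average over all sign vectors σ ∈ {−1,1}^n of the maximum correlation with A satisfies: 2^{−n} · Σ_{σ ∈ {−1,1}^n} max_{a ∈ A} Σ_{i=1}^{n} σ_i a_i ≤ (max_{a ∈ A} ‖a‖₂) · √(2·ln|A|), where ‖a‖₂ is the Euclidean norm. -/
open Finset Real

lemma sum_pi_bool' (n : ℕ) (g : Fin n → Bool → ℝ) :
    ∑ σ : Fin n → Bool, ∏ i, g i (σ i) = ∏ i, ∑ b : Bool, g i b := by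
  rw [Finset.prod_univ_sum, ← Fintype.piFinset_univ]

/-- Massart-type lemma: the Rademacher average of a finite set of vectors
is bounded by (max norm) · √(2 ln|A|). -/
theorem massart_lemma (n : ℕ) (hn : 1 ≤ n)
    (A : Finset (EuclideanSpace ℝ (Fin n))) (hA : A.Nonempty) :
    ((2 : ℝ) ^ n)⁻¹ *
        ∑ σ : Fin n → Bool,
          A.sup' hA (fun a => ∑ i, (if σ i then (1 : ℝ) else -1) * a i) ≤
      (A.sup' hA fun a => ‖a‖) * Real.sqrt (2 * Real.log A.card) := by
  classical
  set M := A.sup' hA fun a => ‖a‖ with hMdef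
  obtain ⟨a₀, ha₀⟩ := hA
  have hM0 : 0 ≤ M := le_trans (norm_nonneg a₀) (Finset.le_sup' _ ha₀)
  by_cases hcard : A.card = 1
  · -- singleton case
    obtain ⟨a, rfl⟩ := Finset.card_eq_one.mp hcard
    set f : (Fin n → Bool) → ℝ := fun σ => ∑ i, (if σ i then (1 : ℝ) else -1) * a i with hf
    have hneg : Function.Involutive (fun σ : Fin n → Bool => fun i => !σ i) := by
      intro σ; funext i; simp
    have hfneg : ∀ σ, f (fun i => !σ i) = - f σ := by
      intro σ
      simp only [hf, ← Finset.sum_neg_distrib]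
      refine Finset.sum_congr rfl fun i _ => ?_
      by_cases h : σ i = true <;> simp [h]
    have hS : ∑ σ : Fin n → Bool, f σ = 0 := by
      set e : Equiv.Perm (Fin n → Bool) := Function.Involutive.toPerm _ hneg with he
      have h1 : ∑ σ : Fin n → Bool, f (e σ) = ∑ σ : Fin n → Bool, f σ :=
        Equiv.sum_comp e f
      have h2 : ∑ σ : Fin n → Bool, f (e σ) = - ∑ σ : Fin n → Bool, f σ := by
        rw [← Finset.sum_neg_distrib]
        exact Finset.sum_congr rfl fun σ _ => hfneg σ
      linarith
    simp only [Finset.sup'_singleton, Finset.card_singleton, Nat.cast_one, Real.log_one,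
      mul_zero, Real.sqrt_zero]
    rw [show (∑ σ : Fin n → Bool, ∑ i, (if σ i then (1 : ℝ) else -1) * a i) = 0 from hS]
    simp
  · -- |A| ≥ 2
    have hA : A.Nonempty := ⟨a₀, ha₀⟩
    have hcard2 : 2 ≤ A.card := by
      have h0 : A.card ≠ 0 := Finset.card_ne_zero_of_mem ha₀
      omega
    set L := Real.log A.card with hLdef
    have hL : 0 < L := Real.log_pos (by exact_mod_cast hcard2)
    by_cases hMpos : 0 < M
    · -- main case
      set l : ℝ := Real.sqrt (2 * L) / M with hldef
      have hsq : Real.sqrt (2 * L) ^ 2 = 2 * L := Real.sq_sqrt (by positivity)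
      have hlpos : 0 < l := div_pos (Real.sqrt_pos.mpr (by positivity)) hMpos
      have hw : ∑ _σ : Fin n → Bool, ((2 : ℝ) ^ n)⁻¹ = 1 := by
        rw [Finset.sum_const, Finset.card_univ]
        simp [nsmul_eq_mul]
      set x : (Fin n → Bool) → ℝ :=
        fun σ => A.sup' hA (fun a => ∑ i, (if σ i then (1 : ℝ) else -1) * a i) with hx
      set E : ℝ := ((2 : ℝ) ^ n)⁻¹ * ∑ σ : Fin n → Bool, x σ with hE
      -- Jensen
      have jensen : Real.exp (l * E) ≤ ((2 : ℝ) ^ n)⁻¹ * ∑ σ : Fin n → Bool,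
          Real.exp (l * x σ) := by
        have h := convexOn_exp.map_sum_le (t := Finset.univ)
          (w := fun _ : Fin n → Bool => ((2 : ℝ) ^ n)⁻¹)
          (p := fun σ => l * x σ) (fun _ _ => by positivity) (by simpa using hw)
          (fun _ _ => trivial)
        calc Real.exp (l * E)
            = Real.exp (∑ σ : Fin n → Bool, ((2 : ℝ) ^ n)⁻¹ • (l * x σ)) := by
              congr 1; simp only [smul_eq_mul, ← Finset.mul_sum, hE]; ring
          _ ≤ ∑ σ : Fin n → Bool, ((2 : ℝ) ^ n)⁻¹ • Real.exp (l * x σ) := h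
          _ = _ := by rw [← Finset.smul_sum]; simp [smul_eq_mul]
      -- sup' ≤ sum of exps
      have sup_le : ∀ σ : Fin n → Bool, Real.exp (l * x σ) ≤
          ∑ a ∈ A, Real.exp (l * ∑ i, (if σ i then (1 : ℝ) else -1) * a i) := by
        intro σ
        obtain ⟨b, hb, hbe⟩ := Finset.exists_mem_eq_sup' hA
          (fun a => ∑ i, (if σ i then (1 : ℝ) else -1) * a i)
        rw [hx]
        calc Real.exp (l * A.sup' hA (fun a => ∑ i, (if σ i then (1 : ℝ) else -1) * a i))
            = Real.exp (l * ∑ i, (if σ i then (1 : ℝ) else -1) * b i) := by rw [hbe]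
          _ ≤ _ := Finset.single_le_sum
              (f := fun a : EuclideanSpace ℝ (Fin n) =>
                Real.exp (l * ∑ i, (if σ i then (1 : ℝ) else -1) * a i))
              (fun a _ => (Real.exp_pos _).le) hb
      -- per-vector MGF bound
      have mgf : ∀ a ∈ A, ((2 : ℝ) ^ n)⁻¹ * ∑ σ : Fin n → Bool,
          Real.exp (l * ∑ i, (if σ i then (1 : ℝ) else -1) * a i) ≤ Real.exp L := by
        intro a ha
        have hprod : ∑ σ : Fin n → Bool,
            Real.exp (l * ∑ i, (if σ i then (1 : ℝ) else -1) * a i)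
            = ∏ i, (2 * Real.cosh (l * a i)) := by
          have : ∀ σ : Fin n → Bool,
              Real.exp (l * ∑ i, (if σ i then (1 : ℝ) else -1) * a i)
              = ∏ i, Real.exp (l * ((if σ i then (1 : ℝ) else -1) * a i)) := by
            intro σ
            rw [← Real.exp_sum, Finset.mul_sum]
          simp only [this]
          rw [sum_pi_bool' n (fun i b => Real.exp (l * ((if b then (1 : ℝ) else -1) * a i)))]
          refine Finset.prod_congr rfl fun i _ => ?_
          rw [Fintype.sum_bool, Real.cosh_eq]
          norm_num
          ring
        rw [hprod]
        have h2n : (∏ _i : Fin n, (2 : ℝ)) = 2 ^ n := by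
          rw [Finset.prod_const, Finset.card_univ, Fintype.card_fin]
        calc ((2 : ℝ) ^ n)⁻¹ * ∏ i, (2 * Real.cosh (l * a i))
            = ∏ i, Real.cosh (l * a i) := by
              rw [Finset.prod_mul_distrib, h2n]
              field_simp
          _ ≤ ∏ i, Real.exp ((l * a i) ^ 2 / 2) :=
              Finset.prod_le_prod (fun i _ => (Real.cosh_pos (l * a i)).le)
                (fun i _ => Real.cosh_le_exp_half_sq _)
          _ = Real.exp (∑ i, (l * a i) ^ 2 / 2) := by rw [Real.exp_sum]
          _ ≤ Real.exp L := by
              apply Real.exp_le_exp.mpr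
              have hna : ∑ i, a i ^ 2 = ‖a‖ ^ 2 := by
                rw [EuclideanSpace.norm_eq, Real.sq_sqrt (by positivity)]
                simp [Real.norm_eq_abs, sq_abs]
              have h1 : ∑ i, (l * a i) ^ 2 / 2 = l ^ 2 * ‖a‖ ^ 2 / 2 := by
                rw [← hna, Finset.mul_sum, Finset.sum_div]
                exact Finset.sum_congr rfl fun i _ => by ring
              rw [h1]
              have haM : ‖a‖ ≤ M := Finset.le_sup' _ ha
              have hl2 : l ^ 2 * M ^ 2 / 2 = L := by
                rw [hldef, div_pow, hsq]
                field_simp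
              calc l ^ 2 * ‖a‖ ^ 2 / 2 ≤ l ^ 2 * M ^ 2 / 2 := by gcongr
                _ = L := hl2
      -- combine
      have key : Real.exp (l * E) ≤ Real.exp (2 * L) := by
        calc Real.exp (l * E)
            ≤ ((2 : ℝ) ^ n)⁻¹ * ∑ σ : Fin n → Bool, Real.exp (l * x σ) := jensen
          _ ≤ ((2 : ℝ) ^ n)⁻¹ * ∑ σ : Fin n → Bool,
                ∑ a ∈ A, Real.exp (l * ∑ i, (if σ i then (1 : ℝ) else -1) * a i) := by
              gcongr with σ _
              exact sup_le σ
          _ = ∑ a ∈ A, ((2 : ℝ) ^ n)⁻¹ * ∑ σ : Fin n → Bool,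
                Real.exp (l * ∑ i, (if σ i then (1 : ℝ) else -1) * a i) := by
              rw [Finset.sum_comm, Finset.mul_sum]
          _ ≤ ∑ _a ∈ A, Real.exp L := Finset.sum_le_sum mgf
          _ = A.card * Real.exp L := by rw [Finset.sum_const, nsmul_eq_mul]
          _ = Real.exp (2 * L) := by
              rw [two_mul, Real.exp_add]
              congr 1
              rw [hLdef, Real.exp_log (by positivity)]
      have hlE : l * E ≤ 2 * L := Real.exp_le_exp.mp key
      have h2 : E ≤ 2 * L / l := (le_div_iff₀ hlpos).mpr (by rw [mul_comm]; exact hlE)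
      have h3 : 2 * L / l = M * Real.sqrt (2 * L) := by
        rw [hldef, div_div_eq_mul_div, mul_comm (2 * L) M, mul_div_assoc, Real.div_sqrt]
      exact le_of_le_of_eq h2 h3
    · -- M = 0 case
      have hM : M = 0 := le_antisymm (not_lt.mp hMpos) hM0
      have hz : ∀ a ∈ A, a = (0 : EuclideanSpace ℝ (Fin n)) := by
        intro a ha
        have h1 : ‖a‖ ≤ M := Finset.le_sup' _ ha
        rw [hM] at h1
        exact norm_eq_zero.mp (le_antisymm h1 (norm_nonneg a))
      have hsup : ∀ σ : Fin n → Bool,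
          A.sup' hA (fun a => ∑ i, (if σ i then (1 : ℝ) else -1) * a i) = 0 := by
        intro σ
        rw [Finset.sup'_congr hA rfl (fun a ha => ?_), Finset.sup'_const]
        rw [hz a ha]
        simp
      simp only [hsup, Finset.sum_const, smul_zero, mul_zero]
      positivity
end

section
/- Under hypotheses (T1), (T2), (P1), (R1), (R2), (E), suppose 0 ≤ γ < 1, let 𝒯, 𝒯' : S × A × Ξ → S satisfy ‖𝒯(s,a,ξ) − 𝒯'(s,a,ξ)‖ ≤ ζ for all s, a, ξ (𝒯 satisfying (T1), (T2)), let f : S → S be a distractor with ‖φ(f(x)) − φ(x)‖ ≤ ϱ for all x ∈ S, and let r' : S × A → ℝ be a second reward function with |r(s,a) − r'(s,a)| ≤ ε_r for all s, a. Let u, v : ℕ → S be trajectories with the same parameter θ and same noise sequence ξ, where u(t+1) = 𝒯(u(t), π(φ(u(t)),θ), ξ(t)), v(t+1) = 𝒯'(v(t), π(φ(v(t)),θ), ξ(t)), and ‖u(0) − v(0)‖ ≤ ε. Then for every T ∈ ℕ: |Σ_{t=0}^{T} γ^t r'(v(t), π(φ(f(v(t))),θ)) − Σ_{t=0}^{T}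 γ^t r(u(t), π(φ(u(t)),θ))| ≤ λ·ζ·Σ_{t=0}^{T} γ^t Σ_{k=0}^{t−1} ν^k + λ·ε·Σ_{t=0}^{T} γ^t ν^t + (L_{r2}·L_{π1}·ϱ + ε_r)·(1−γ^{T+1})/(1−γ), where ν = L_{t1} + L_{t2}·L_{π1}·L_φ and λ = L_{r1} + L_{r2}·L_{π1}·L_φ. -/
/-- Theorem: performance shift between the training environment (trajectory u,
reward r, no distractor) and a testing environment with a different reward
function r' (trajectory v, distractor f). -/
theorem train_test_shift_different_rewards
    {S Φ A Θ Ξ : Type*}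
    [NormedAddCommGroup S] [NormedSpace ℝ S]
    [NormedAddCommGroup Φ] [NormedSpace ℝ Φ]
    [NormedAddCommGroup A] [NormedSpace ℝ A]
    [NormedAddCommGroup Θ] [NormedSpace ℝ Θ]
    (φ : S → Φ) (π : Φ → Θ → A) (r r' : S → A → ℝ) (𝒯 𝒯' : S → A → Ξ → S)
    (Lt1 Lt2 Lπ1 Lr1 Lr2 Lφ : ℝ)
    (hLt1 : 0 ≤ Lt1) (hLt2 : 0 ≤ Lt2) (hLπ1 : 0 ≤ Lπ1)
    (hLr1 : 0 ≤ Lr1) (hLr2 : 0 ≤ Lr2) (hLφ : 0 ≤ Lφ)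
    (hT1 : ∀ (s s' : S) (a : A) (ξ : Ξ), ‖𝒯 s a ξ - 𝒯 s' a ξ‖ ≤ Lt1 * ‖s - s'‖)
    (hT2 : ∀ (s : S) (a a' : A) (ξ : Ξ), ‖𝒯 s a ξ - 𝒯 s a' ξ‖ ≤ Lt2 * ‖a - a'‖)
    (hP1 : ∀ (x y : Φ) (θ : Θ), ‖π x θ - π y θ‖ ≤ Lπ1 * ‖x - y‖)
    (hR1 : ∀ (s s' : S) (a : A), |r s a - r s' a| ≤ Lr1 * ‖s - s'‖)
    (hR2 : ∀ (s : S) (a a' : A), |r s a - r s a'| ≤ Lr2 * ‖a - a'‖)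
    (hE : ∀ s s' : S, ‖φ s - φ s'‖ ≤ Lφ * ‖s - s'‖)
    (γ : ℝ) (hγ0 : 0 ≤ γ) (hγ1 : γ < 1)
    (ε ζ ϱ εr : ℝ) (hε : 0 ≤ ε) (hζ : 0 ≤ ζ) (hϱ : 0 ≤ ϱ) (hεr : 0 ≤ εr)
    (hTT' : ∀ (s : S) (a : A) (ξ : Ξ), ‖𝒯 s a ξ - 𝒯' s a ξ‖ ≤ ζ)
    (f : S → S) (hf : ∀ x : S, ‖φ (f x) - φ x‖ ≤ ϱ)
    (hrr' : ∀ (s : S) (a : A), |r s a - r' s a| ≤ εr)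
    (ξ : ℕ → Ξ) (θ : Θ) (u v : ℕ → S)
    (hu : ∀ t, u (t + 1) = 𝒯 (u t) (π (φ (u t)) θ) (ξ t))
    (hv : ∀ t, v (t + 1) = 𝒯' (v t) (π (φ (v t)) θ) (ξ t))
    (h0 : ‖u 0 - v 0‖ ≤ ε) :
    ∀ T : ℕ,
      |∑ t ∈ Finset.range (T + 1), γ ^ t * r' (v t) (π (φ (f (v t))) θ) -
        ∑ t ∈ Finset.range (T + 1), γ ^ t * r (u t) (π (φ (u t)) θ)| ≤
      (Lr1 + Lr2 * Lπ1 * Lφ) * ζ *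
          ∑ t ∈ Finset.range (T + 1),
            γ ^ t * ∑ k ∈ Finset.range t, (Lt1 + Lt2 * Lπ1 * Lφ) ^ k +
        (Lr1 + Lr2 * Lπ1 * Lφ) * ε *
          ∑ t ∈ Finset.range (T + 1), γ ^ t * (Lt1 + Lt2 * Lπ1 * Lφ) ^ t +
        (Lr2 * Lπ1 * ϱ + εr) * ((1 - γ ^ (T + 1)) / (1 - γ)) := by
  intro T
  set ν := Lt1 + Lt2 * Lπ1 * Lφ with hνdef
  set lam := Lr1 + Lr2 * Lπ1 * Lφ with hlamdef
  have hν0 : 0 ≤ ν := by positivity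
  have hlam0 : 0 ≤ lam := by positivity
  -- distance bound between trajectories
  have hd : ∀ t, ‖u t - v t‖ ≤ ζ * ∑ k ∈ Finset.range t, ν ^ k + ε * ν ^ t := by
    intro t
    induction t with
    | zero => simpa using h0
    | succ t ih =>
      have key : ‖u (t + 1) - v (t + 1)‖ ≤ ν * ‖u t - v t‖ + ζ := by
        rw [hu t, hv t]
        have hsplit : 𝒯 (u t) (π (φ (u t)) θ) (ξ t) - 𝒯' (v t) (π (φ (v t)) θ) (ξ t)
            = (𝒯 (u t) (π (φ (u t)) θ) (ξ t) - 𝒯 (v t) (π (φ (u t)) θ) (ξ t))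
            + (𝒯 (v t) (π (φ (u t)) θ) (ξ t) - 𝒯 (v t) (π (φ (v t)) θ) (ξ t))
            + (𝒯 (v t) (π (φ (v t)) θ) (ξ t) - 𝒯' (v t) (π (φ (v t)) θ) (ξ t)) := by abel
        have h1 := hT1 (u t) (v t) (π (φ (u t)) θ) (ξ t)
        have h2 := hT2 (v t) (π (φ (u t)) θ) (π (φ (v t)) θ) (ξ t)
        have h3 := hTT' (v t) (π (φ (v t)) θ) (ξ t)
        have hp := hP1 (φ (u t)) (φ (v t)) θ
        have he := hE (u t) (v t)
        have hpn : 0 ≤ ‖π (φ (u t)) θ - π (φ (v t)) θ‖ := norm_nonneg _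
        have hen : 0 ≤ ‖φ (u t) - φ (v t)‖ := norm_nonneg _
        calc ‖𝒯 (u t) (π (φ (u t)) θ) (ξ t) - 𝒯' (v t) (π (φ (v t)) θ) (ξ t)‖
            ≤ ‖𝒯 (u t) (π (φ (u t)) θ) (ξ t) - 𝒯 (v t) (π (φ (u t)) θ) (ξ t)‖
            + ‖𝒯 (v t) (π (φ (u t)) θ) (ξ t) - 𝒯 (v t) (π (φ (v t)) θ) (ξ t)‖
            + ‖𝒯 (v t) (π (φ (v t)) θ) (ξ t) - 𝒯' (v t) (π (φ (v t)) θ) (ξ t)‖ := by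
              rw [hsplit]; exact norm_add₃_le
          _ ≤ ν * ‖u t - v t‖ + ζ := by
              have h2' : ‖𝒯 (v t) (π (φ (u t)) θ) (ξ t) - 𝒯 (v t) (π (φ (v t)) θ) (ξ t)‖
                  ≤ Lt2 * Lπ1 * Lφ * ‖u t - v t‖ := by
                calc ‖𝒯 (v t) (π (φ (u t)) θ) (ξ t) - 𝒯 (v t) (π (φ (v t)) θ) (ξ t)‖
                    ≤ Lt2 * ‖π (φ (u t)) θ - π (φ (v t)) θ‖ := h2
                  _ ≤ Lt2 * (Lπ1 * ‖φ (u t) - φ (v t)‖) :=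
                      mul_le_mul_of_nonneg_left hp hLt2
                  _ ≤ Lt2 * (Lπ1 * (Lφ * ‖u t - v t‖)) :=
                      mul_le_mul_of_nonneg_left
                        (mul_le_mul_of_nonneg_left he hLπ1) hLt2
                  _ = Lt2 * Lπ1 * Lφ * ‖u t - v t‖ := by ring
              simp only [hνdef]; linarith
      have hstep : ν * ‖u t - v t‖ + ζ
          ≤ ζ * ∑ k ∈ Finset.range (t + 1), ν ^ k + ε * ν ^ (t + 1) := by
        rw [geom_sum_succ, pow_succ]
        nlinarith [mul_le_mul_of_nonneg_left ih hν0]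
      exact key.trans hstep
  -- per-step reward bound
  have hr : ∀ t, |r' (v t) (π (φ (f (v t))) θ) - r (u t) (π (φ (u t)) θ)|
      ≤ lam * (ζ * ∑ k ∈ Finset.range t, ν ^ k + ε * ν ^ t) + (Lr2 * Lπ1 * ϱ + εr) := by
    intro t
    have h1 : |r' (v t) (π (φ (f (v t))) θ) - r (v t) (π (φ (f (v t))) θ)| ≤ εr := by
      rw [abs_sub_comm]; exact hrr' _ _
    have h2 : |r (v t) (π (φ (f (v t))) θ) - r (v t) (π (φ (v t)) θ)| ≤ Lr2 * Lπ1 * ϱ := by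
      calc |r (v t) (π (φ (f (v t))) θ) - r (v t) (π (φ (v t)) θ)|
          ≤ Lr2 * ‖π (φ (f (v t))) θ - π (φ (v t)) θ‖ := hR2 _ _ _
        _ ≤ Lr2 * (Lπ1 * ‖φ (f (v t)) - φ (v t)‖) :=
            mul_le_mul_of_nonneg_left (hP1 _ _ _) hLr2
        _ ≤ Lr2 * (Lπ1 * ϱ) :=
            mul_le_mul_of_nonneg_left
              (mul_le_mul_of_nonneg_left (hf (v t)) hLπ1) hLr2
        _ = Lr2 * Lπ1 * ϱ := by ring
    have h3 : |r (v t) (π (φ (v t)) θ) - r (u t) (π (φ (u t)) θ)| ≤ lam * ‖u t - v t‖ := by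
      have ha : |r (v t) (π (φ (v t)) θ) - r (u t) (π (φ (v t)) θ)| ≤ Lr1 * ‖u t - v t‖ := by
        have := hR1 (v t) (u t) (π (φ (v t)) θ)
        rwa [norm_sub_rev] at this
      have hb : |r (u t) (π (φ (v t)) θ) - r (u t) (π (φ (u t)) θ)|
          ≤ Lr2 * Lπ1 * Lφ * ‖u t - v t‖ := by
        have he := hE (v t) (u t)
        rw [norm_sub_rev (v t)] at he
        calc |r (u t) (π (φ (v t)) θ) - r (u t) (π (φ (u t)) θ)|
            ≤ Lr2 * ‖π (φ (v t)) θ - π (φ (u t)) θ‖ := hR2 _ _ _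
          _ ≤ Lr2 * (Lπ1 * ‖φ (v t) - φ (u t)‖) :=
              mul_le_mul_of_nonneg_left (hP1 _ _ _) hLr2
          _ ≤ Lr2 * (Lπ1 * (Lφ * ‖u t - v t‖)) :=
              mul_le_mul_of_nonneg_left
                (mul_le_mul_of_nonneg_left he hLπ1) hLr2
          _ = Lr2 * Lπ1 * Lφ * ‖u t - v t‖ := by ring
      calc |r (v t) (π (φ (v t)) θ) - r (u t) (π (φ (u t)) θ)|
          ≤ |r (v t) (π (φ (v t)) θ) - r (u t) (π (φ (v t)) θ)|
          + |r (u t) (π (φ (v t)) θ) - r (u t) (π (φ (u t)) θ)| := abs_sub_le _ _ _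
        _ ≤ lam * ‖u t - v t‖ := by simp only [hlamdef]; linarith
    have h4 : lam * ‖u t - v t‖ ≤ lam * (ζ * ∑ k ∈ Finset.range t, ν ^ k + ε * ν ^ t) :=
      mul_le_mul_of_nonneg_left (hd t) hlam0
    calc |r' (v t) (π (φ (f (v t))) θ) - r (u t) (π (φ (u t)) θ)|
        ≤ |r' (v t) (π (φ (f (v t))) θ) - r (v t) (π (φ (f (v t))) θ)|
        + |r (v t) (π (φ (f (v t))) θ) - r (v t) (π (φ (v t)) θ)|
        + |r (v t) (π (φ (v t)) θ) - r (u t) (π (φ (u t)) θ)| := by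
          have hA := abs_sub_le (r' (v t) (π (φ (f (v t))) θ))
            (r (v t) (π (φ (f (v t))) θ)) (r (u t) (π (φ (u t)) θ))
          have hB := abs_sub_le (r (v t) (π (φ (f (v t))) θ))
            (r (v t) (π (φ (v t)) θ)) (r (u t) (π (φ (u t)) θ))
          linarith
      _ ≤ lam * (ζ * ∑ k ∈ Finset.range t, ν ^ k + ε * ν ^ t) + (Lr2 * Lπ1 * ϱ + εr) := by
          linarith
  -- sum it up
  have hgeom : ∑ t ∈ Finset.range (T + 1), γ ^ t = (1 - γ ^ (T + 1)) / (1 - γ) := by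
    rw [geom_sum_eq (ne_of_lt hγ1)]
    rw [div_eq_div_iff (by linarith) (by linarith)]
    ring
  calc |∑ t ∈ Finset.range (T + 1), γ ^ t * r' (v t) (π (φ (f (v t))) θ) -
        ∑ t ∈ Finset.range (T + 1), γ ^ t * r (u t) (π (φ (u t)) θ)|
      = |∑ t ∈ Finset.range (T + 1),
          (γ ^ t * r' (v t) (π (φ (f (v t))) θ) - γ ^ t * r (u t) (π (φ (u t)) θ))| := by
        rw [Finset.sum_sub_distrib]
    _ ≤ ∑ t ∈ Finset.range (T + 1),
          |γ ^ t * r' (v t) (π (φ (f (v t))) θ) - γ ^ t * r (u t) (π (φ (u t)) θ)| :=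
        Finset.abs_sum_le_sum_abs _ _
    _ ≤ ∑ t ∈ Finset.range (T + 1),
          γ ^ t * (lam * (ζ * ∑ k ∈ Finset.range t, ν ^ k + ε * ν ^ t)
            + (Lr2 * Lπ1 * ϱ + εr)) := by
        apply Finset.sum_le_sum
        intro t _
        rw [← mul_sub, abs_mul, abs_pow, abs_of_nonneg hγ0]
        exact mul_le_mul_of_nonneg_left (hr t) (pow_nonneg hγ0 t)
    _ = ∑ t ∈ Finset.range (T + 1),
          (lam * ζ * (γ ^ t * ∑ k ∈ Finset.range t, ν ^ k)
            + lam * ε * (γ ^ t * ν ^ t) + (Lr2 * Lπ1 * ϱ + εr) * γ ^ t) := by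
        apply Finset.sum_congr rfl
        intro t _
        ring
    _ = lam * ζ * ∑ t ∈ Finset.range (T + 1), γ ^ t * ∑ k ∈ Finset.range t, ν ^ k
        + lam * ε * ∑ t ∈ Finset.range (T + 1), γ ^ t * ν ^ t
        + (Lr2 * Lπ1 * ϱ + εr) * ∑ t ∈ Finset.range (T + 1), γ ^ t := by
        rw [Finset.sum_add_distrib, Finset.sum_add_distrib,
          ← Finset.mul_sum, ← Finset.mul_sum, ← Finset.mul_sum]
    _ = _ := by rw [hgeom]
end
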